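/- Let σ : A → A^+ be a substitution with |σ^n(a)| → ∞ as n → ∞ for every a ∈ A. Then X_σ = {w(m̄) : m̄ ∈ M₀} ∪ ⋃_{s̄ ∈ Λ} Orb_{T_σ}(w(s̄)), where Orb_{T_σ}(y) = {T_σ^k y : k ∈ ℤ}. -/

import Mathlib

open Filter Topology

namespace PaperStmt

variable {A : Type*} {B : Type*}

/-- Apply a substitution (letter-to-word map) to a word, by concatenation. -/
def substWord (σ : B → List A) (w : List B) : List A := w.flatMap σ

/-- `σ^n` applied to a word. -/
def substIter (σ : A → List A) (n : ℕ) (w : List A) : List A := (substWord σ)^[n] w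

/-- `σ^n(a)` for a letter `a`. -/
def substPow (σ : A → List A) (n : ℕ) (a : A) : List A := substIter σ n [a]

/-- The language of a substitution: factors of some `σ^n(a)`, `n ≥ 1`. -/
def Lang (σ : A → List A) : Set (List A) :=
  {w | ∃ a : A, ∃ n : ℕ, 1 ≤ n ∧ w <:+: substIter σ n [a]}

/-- The word `x[i], x[i+1], …, x[i+len-1]` read in a bi-infinite sequence. -/
def seg (x : ℤ → A) (i : ℤ) (len : ℕ) : List A :=
  (List.range len).map fun k => x (i + k)

/-- The phase space `X_σ` of the substitutional dynamical system. -/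
def Xsub (σ : A → List A) : Set (ℤ → A) :=
  {x | ∀ n : ℕ, seg x (-(n : ℤ)) (2 * n + 1) ∈ Lang σ}

/-- `L(X_σ)`: all finite words occurring in elements of `X_σ`. -/
def LangX (σ : A → List A) : Set (List A) :=
  {w | ∃ x ∈ Xsub σ, ∃ i : ℤ, seg x i w.length = w}

/-- The left shift `T`. -/
def shift (x : ℤ → A) : ℤ → A := fun k => x (k + 1)

/-- The power `T^i` of the left shift, `i ∈ ℤ`. -/
def shiftZ (i : ℤ) (x : ℤ → A) : ℤ → A := fun k => x (k + i)

/-- `(X_σ, T_σ)` has no periodic points. -/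
def Aperiodic (σ : A → List A) : Prop :=
  ∀ x ∈ Xsub σ, ∀ p : ℕ, 0 < p → shiftZ (p : ℤ) x ≠ x

/-- The coordinate at which the `n`-th block of the bi-infinite concatenation
`⋯ σ(x_{-1}).σ(x_0) σ(x_1) ⋯` starts (block `0` starts at coordinate `0`). -/
def blockStart (σ : B → List A) (x : ℤ → B) (n : ℤ) : ℤ :=
  if 0 ≤ n then ∑ j ∈ Finset.range n.toNat, ((σ (x (j : ℤ))).length : ℤ)
  else -∑ j ∈ Finset.range (-n).toNat, ((σ (x (-(j : ℤ) - 1))).length : ℤ)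

/-- `y` is the image of the bi-infinite sequence `x` under the substitution `σ`,
i.e. `y = ⋯ σ(x_{-1}).σ(x_0)σ(x_1)⋯` with `σ(x_0)` starting at coordinate `0`. -/
def IsSubstImage (σ : B → List A) (x : ℤ → B) (y : ℤ → A) : Prop :=
  ∀ n : ℤ, seg y (blockStart σ x n) (σ (x n)).length = σ (x n)

/-- `A_l`: the letters `a` with `|σ^n(a)| → ∞`. -/
def longLetters (σ : A → List A) : Set A :=
  {a | Tendsto (fun n => (substPow σ n a).length) atTop atTop}

/-- A minimal component of `(X_σ, T_σ)`: a nonempty closed shift-invariant subset of `X_σ`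
that is minimal with respect to inclusion. -/
def MinimalComponent [TopologicalSpace A] (σ : A → List A) (Z : Set (ℤ → A)) : Prop :=
  Z.Nonempty ∧ IsClosed Z ∧ Z ⊆ Xsub σ ∧ shift '' Z = Z ∧
    ∀ Z' : Set (ℤ → A), Z'.Nonempty → IsClosed Z' → Z' ⊆ Z → shift '' Z' = Z' → Z' = Z

/-- The element `T_σ^i σ^n([a])` of the Kakutani–Rokhlin partition `P_n`. -/
def piece (σ : A → List A) (n : ℕ) (a : A) (i : ℕ) : Set (ℤ → A) :=
  {x | ∃ y z : ℤ → A, y ∈ Xsub σ ∧ y 0 = a ∧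
    IsSubstImage (substPow σ n) y z ∧ x = shiftZ (i : ℤ) z}

/-- An `m`-primitive substitution, with respect to a decomposition
`A = P 0 ⊔ … ⊔ P (m-1) ⊔ A0`. -/
def IsMPrimitive (σ : A → List A) (m : ℕ) (P : Fin m → Set A) (A0 : Set A) : Prop :=
  (∀ i j : Fin m, i ≠ j → Disjoint (P i) (P j)) ∧
  (∀ i, Disjoint (P i) A0) ∧
  ((⋃ i, P i) ∪ A0 = Set.univ) ∧
  (∀ i, ∃ a ∈ P i, ∃ b ∈ P i, a ≠ b) ∧
  (∀ i, ∀ a ∈ P i, ∀ b ∈ σ a, b ∈ P i) ∧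
  (∀ i, ∀ a ∈ P i, ∀ b ∈ P i, ∃ n : ℕ, 1 ≤ n ∧ b ∈ substPow σ n a) ∧
  (∀ a : A, ∃ n : ℕ, 0 < n ∧ ∃ i, ∃ b ∈ P i, b ∈ substPow σ n a) ∧
  (∀ k : ℕ, 1 ≤ k → Lang (substPow σ k) = Lang σ) ∧
  (∀ a : A, [a] ∈ LangX σ)

/-- The set `Z_i` attached to the part `A_i = P i` of an `m`-primitive substitution. -/
def Zset (σ : A → List A) {m : ℕ} (P : Fin m → Set A) (i : Fin m) : Set (ℤ → A) :=
  {x | x ∈ Xsub σ ∧ ∀ n : ℕ, ∃ k : ℕ, 1 ≤ k ∧ ∃ a ∈ P i,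
    seg x (-(n : ℤ)) (2 * n + 1) <:+: substPow σ k a}

/-- The clopen set `W = ∪_i [r_i.l_i]` built from fixed points `w i`. -/
def Wset (σ : A → List A) {m : ℕ} (w : Fin m → ℤ → A) : Set (ℤ → A) :=
  ⋃ i : Fin m, {x | x ∈ Xsub σ ∧ x (-1) = w i (-1) ∧ x 0 = w i 0}

/-- A return word, given the letters `r i = w_i[-1]` and `l i = w_i[0]`. -/
def IsReturnWord (σ : A → List A) {m : ℕ} (r l : Fin m → A) (u : List A) : Prop :=
  u ∈ LangX σ ∧ u ≠ [] ∧ ∃ i j : Fin m,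
    (r i :: (u ++ [l j])) ∈ LangX σ ∧
    u.head? = some (l i) ∧ u.getLast? = some (r j) ∧
    ∀ t : Fin m, ¬ ([r t, l t] <:+: u)

/-- A proper substitution. -/
def IsProper (σ : A → List A) : Prop :=
  ∃ p : ℕ, 0 < p ∧ ∀ a : A,
    (∀ b c : A, [a, b] ∈ LangX σ → [a, c] ∈ LangX σ →
      (substPow σ p b).head? = (substPow σ p c).head?) ∧
    (∀ b c : A, [b, a] ∈ LangX σ → [c, a] ∈ LangX σ →
      (substPow σ p b).getLast? = (substPow σ p c).getLast?)

/-- Membership in the set `V` of words `v₁S₁v₂S₂v₃` with `v₁,v₂,v₃ ∈ A_l`, `S₁,S₂ ∈ A_s^*`. -/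
def Vcond (σ : A → List A) : A × List A × A × List A × A → Prop
  | (v1, S1, v2, S2, v3) =>
    v1 ∈ longLetters σ ∧ v2 ∈ longLetters σ ∧ v3 ∈ longLetters σ ∧
    (∀ c ∈ S1, c ∉ longLetters σ) ∧ (∀ c ∈ S2, c ∉ longLetters σ) ∧
    (v1 :: (S1 ++ v2 :: (S2 ++ [v3]))) ∈ LangX σ

/-- The cylinder set `[v₁S₁.v₂S₂v₃]`. -/
def Vbase (σ : A → List A) : A × List A × A × List A × A → Set (ℤ → A)
  | (v1, S1, v2, S2, v3) =>
    {x | x ∈ Xsub σ ∧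
      seg x (-(1 + S1.length : ℤ)) (v1 :: (S1 ++ v2 :: (S2 ++ [v3]))).length
        = v1 :: (S1 ++ v2 :: (S2 ++ [v3]))}

/-- The height `|σ^n(v₂S₂)|` of the tower over `[v₁S₁.v₂S₂v₃]` in `Ξ_n`. -/
def Vheight (σ : A → List A) (n : ℕ) : A × List A × A × List A × A → ℕ
  | (_, _, v2, S2, _) => (substWord (substPow σ n) (v2 :: S2)).length

/-- The element `T_σ^i σ^n([v₁S₁.v₂S₂v₃])` of the Kakutani–Rokhlin partition `Ξ_n`. -/
def Vpiece (σ : A → List A) (n : ℕ) (q : A × List A × A × List A × A) (i : ℕ) :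
    Set (ℤ → A) :=
  {x | ∃ y z : ℤ → A, y ∈ Vbase σ q ∧ IsSubstImage (substPow σ n) y z ∧
    x = shiftZ (i : ℤ) z}

/-- Membership in `Λ`. -/
def MemLambda (σ : A → List A) (s : ℕ → A × A) : Prop :=
  ∀ n : ℕ, [(s n).1, (s n).2] ∈ Lang σ ∧
    (σ (s (n + 1)).1).getLast? = some (s n).1 ∧
    (σ (s (n + 1)).2).head? = some (s n).2

/-- `x = w(s̄)` for `s̄ ∈ Λ`. -/
def IsLambdaPoint (σ : A → List A) (s : ℕ → A × A) (x : ℤ → A) : Prop :=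
  ∀ n : ℕ, seg x (-((substPow σ n (s n).1).length : ℤ))
      ((substPow σ n (s n).1).length + (substPow σ n (s n).2).length)
    = substPow σ n (s n).1 ++ substPow σ n (s n).2

/-- Membership in `M`: `i₀ = 0` and `a_j` occurs at position `i_{j+1}` of `σ(a_{j+1})`. -/
def MemM (σ : A → List A) (t : ℕ → A × ℕ) : Prop :=
  (t 0).2 = 0 ∧ ∀ j : ℕ, (σ (t (j + 1)).1)[(t (j + 1)).2]? = some (t j).1

/-- The cutting points `j_n` attached to an element of `M`. -/
def jSeq (σ : A → List A) (t : ℕ → A × ℕ) : ℕ → ℕ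
  | 0 => 0
  | n + 1 =>
      jSeq σ t n + (substWord (substPow σ n) ((σ (t (n + 1)).1).take (t (n + 1)).2)).length

/-- Membership in `M₀`: `j_n → ∞` and `|σ^n(a_n)| - j_n → ∞`. -/
def MZero (σ : A → List A) (t : ℕ → A × ℕ) : Prop :=
  MemM σ t ∧ ∀ N : ℕ, ∃ n0 : ℕ, ∀ n ≥ n0,
    N ≤ jSeq σ t n ∧ jSeq σ t n + N ≤ (substPow σ n (t n).1).length

/-- `x = w(m̄)` for `m̄ ∈ M₀`. -/
def IsMPoint (σ : A → List A) (t : ℕ → A × ℕ) (x : ℤ → A) : Prop :=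
  ∀ n : ℕ, seg x (-(jSeq σ t n : ℤ)) (substPow σ n (t n).1).length = substPow σ n (t n).1

/-!
Fix `x ∈ X_σ`. Each window `x[-n, n]` sits in some `σ^k(a)`, and cutting
`σ^k(a) = σ^p(σ^(k-p)(a))` into `σ^p`-blocks exhibits a letter `b_p` whose block covers the
origin, together with its two neighbours and the offset `j_p` of the origin in that block. At each
level there are finitely many such frames, so König's lemma gives one frame per level, the frame
of level `p` being obtained by cutting the frame of level `p + 1` once more. Both `j_p` and the
distance `|σ^p(b_p)| - j_p` from the origin to the right end of the block are nondecreasing.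
If both tend to infinity, the letters `b_p` together with the positions of `b_p` in `σ(b_(p+1))`
form some `m̄ ∈ M₀` with `x = w(m̄)`. If one of them stabilises, the origin eventually stays at a
fixed distance from a block boundary, and the letters on the two sides of that boundary form some
`s̄ ∈ Λ` with `x` in the orbit of `w(s̄)`.
-/

section Words

variable (σ : A → List A)

@[simp] lemma substWord_nil (τ : B → List A) : substWord τ [] = [] := rfl

@[simp] lemma substWord_cons (τ : B → List A) (b : B) (u : List B) :
    substWord τ (b :: u) = τ b ++ substWord τ u :=
  List.flatMap_cons

@[simp] lemma substWord_append (τ : B → List A) (u v : List B) :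
    substWord τ (u ++ v) = substWord τ u ++ substWord τ v :=
  List.flatMap_append

lemma substPow_succ (p : ℕ) (a : A) : substPow σ (p + 1) a = substIter σ p (σ a) := by
  simp [substPow, substIter, Function.iterate_succ_apply, substWord]

lemma substPow_succ' (p : ℕ) (a : A) : substPow σ (p + 1) a = substWord σ (substPow σ p a) :=
  Function.iterate_succ_apply' ..

lemma substIter_eq_substWord (p : ℕ) (w : List A) :
    substIter σ p w = substWord (substPow σ p) w := by
  induction p with
  | zero => exact (List.flatMap_singleton' w).symm
  | succ p ih =>
    rw [substIter, Function.iterate_succ_apply', ← substIter, ih]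
    exact List.flatMap_assoc.trans
      (congrArg (List.flatMap · w) (funext fun a => (substPow_succ' σ p a).symm))

@[simp] lemma substIter_nil (p : ℕ) : substIter σ p [] = [] := by
  simp [substIter_eq_substWord]

@[simp] lemma substIter_cons (p : ℕ) (a : A) (u : List A) :
    substIter σ p (a :: u) = substPow σ p a ++ substIter σ p u := by
  simp [substIter_eq_substWord]

@[simp] lemma substIter_append (p : ℕ) (u v : List A) :
    substIter σ p (u ++ v) = substIter σ p u ++ substIter σ p v := by
  simp [substIter_eq_substWord]

lemma substIter_add (m n : ℕ) (w : List A) :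
    substIter σ (m + n) w = substIter σ m (substIter σ n w) :=
  Function.iterate_add_apply ..

lemma substIter_succ (p : ℕ) (w : List A) :
    substIter σ (p + 1) w = substIter σ p (substWord σ w) :=
  Function.iterate_succ_apply ..

lemma substIter_succ' (p : ℕ) (w : List A) :
    substIter σ (p + 1) w = substWord σ (substIter σ p w) :=
  Function.iterate_succ_apply' ..

lemma length_substIter (p : ℕ) (u : List A) :
    (substIter σ p u).length = (u.map fun a => (substPow σ p a).length).sum := by
  rw [substIter_eq_substWord, substWord, List.length_flatMap]

lemma substIter_infix_substIter {u v : List A} (p : ℕ) (h : u <:+: v) :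
    substIter σ p u <:+: substIter σ p v := by
  obtain ⟨s, t, rfl⟩ := h
  exact ⟨substIter σ p s, substIter σ p t, by simp⟩

variable {σ} (hne : ∀ a, σ a ≠ [])
include hne

lemma substPow_ne_nil (p : ℕ) (a : A) : substPow σ p a ≠ [] := by
  induction p generalizing a with
  | zero => simp [substPow, substIter]
  | succ p ih =>
    obtain ⟨c, u, hc⟩ := List.exists_cons_of_ne_nil (hne a)
    simp [substPow_succ, hc, ih]

lemma substIter_ne_nil (p : ℕ) {u : List A} (hu : u ≠ []) : substIter σ p u ≠ [] := by
  obtain ⟨c, u, rfl⟩ := List.exists_cons_of_ne_nil hu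
  simp [substPow_ne_nil hne]

lemma length_le_length_substWord (u : List A) : u.length ≤ (substWord σ u).length := by
  induction u with
  | nil => simp
  | cons a u ih =>
    have := List.length_pos_of_ne_nil (hne a)
    simp only [substWord_cons, List.length_append, List.length_cons]
    omega

lemma monotone_length_substPow (a : A) : Monotone fun p => (substPow σ p a).length :=
  monotone_nat_of_le_succ fun p => by
    simpa only [substPow_succ'] using length_le_length_substWord hne (substPow σ p a)

omit hne in
lemma ne_nil_of_tendsto_length
    (hlen : ∀ a, Tendsto (fun n => (substPow σ n a).length) atTop atTop) (a : A) : σ a ≠ [] := by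
  intro h
  obtain ⟨N, hN⟩ := eventually_atTop.1 ((hlen a).eventually_gt_atTop 0)
  simpa [substPow_succ, h] using hN (N + 1) (by omega)

end Words


section Language

variable {σ : A → List A}

lemma mem_lang_of_infix {u w : List A} (h : u <:+: w) (hw : w ∈ Lang σ) : u ∈ Lang σ := by
  obtain ⟨a, n, hn, hinf⟩ := hw
  exact ⟨a, n, hn, h.trans hinf⟩

lemma substIter_mem_lang {u : List A} (m : ℕ) (hu : u ∈ Lang σ) : substIter σ m u ∈ Lang σ := by
  obtain ⟨a, n, hn, hinf⟩ := hu
  exact ⟨a, m + n, by omega, substIter_add σ m n [a] ▸ substIter_infix_substIter σ m hinf⟩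

lemma pair_mem_lang_of_succ {l b l' b' : A} (h : [l', b'] ∈ Lang σ)
    (hl : (σ l').getLast? = some l) (hb : (σ b').head? = some b) : [l, b] ∈ Lang σ := by
  refine mem_lang_of_infix ?_ (substIter_mem_lang 1 h)
  obtain ⟨u, hu⟩ := List.getLast?_eq_some_iff.1 hl
  obtain ⟨v, hv⟩ := List.head?_eq_some_iff.1 hb
  exact ⟨u, v, by simp [substIter, substWord, hu, hv]⟩

end Language

section Segments

-- In `seg`, `List.range len` is first coerced to a list of integers.
lemma seg_eq_map (x : ℤ → A) (i : ℤ) (len : ℕ) :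
    seg x i len = (List.range len).map fun k : ℕ => x (i + k) := by
  simp [seg, List.map_eq_flatMap, List.flatMap_assoc]

@[simp] lemma seg_length (x : ℤ → A) (i : ℤ) (len : ℕ) : (seg x i len).length = len := by
  simp [seg_eq_map]

lemma seg_add (x : ℤ → A) (i : ℤ) (m n : ℕ) :
    seg x i (m + n) = seg x i m ++ seg x (i + m) n := by
  simp [seg_eq_map, List.range_add, add_assoc]

lemma seg_append_eq_iff {x : ℤ → A} {i : ℤ} {u v : List A} :
    seg x i (u ++ v).length = u ++ v ↔
      seg x i u.length = u ∧ seg x (i + u.length) v.length = v := by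
  rw [List.length_append, seg_add]
  exact ⟨fun h => List.append_inj h (seg_length ..), fun ⟨h₁, h₂⟩ => by rw [h₁, h₂]⟩

lemma seg_shiftZ (x : ℤ → A) (d i : ℤ) (len : ℕ) :
    seg (shiftZ d x) i len = seg x (i + d) len := by
  simp [seg_eq_map, shiftZ, add_right_comm]

lemma seg_infix_seg (x : ℤ → A) {i i' : ℤ} {L L' : ℕ} (h : i ≤ i') (h' : i' + L' ≤ i + L) :
    seg x i' L' <:+: seg x i L := by
  obtain ⟨d, rfl⟩ : ∃ d : ℕ, i' = i + d := ⟨(i' - i).toNat, by omega⟩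
  obtain ⟨e, rfl⟩ : ∃ e : ℕ, L = d + L' + e := ⟨L - d - L', by omega⟩
  rw [seg_add, seg_add]
  exact ⟨_, _, rfl⟩

/-- A factor `v` of a word that lies inside the occurrence of the window `seg x i L` is read
off `x`. -/
lemma seg_eq_of_append_eq {x : ℤ → A} {i : ℤ} {L : ℕ} {l r P v S : List A}
    (h : l ++ seg x i L ++ r = P ++ v ++ S) (h₁ : l.length ≤ P.length)
    (h₂ : P.length + v.length ≤ l.length + L) :
    seg x (i + (P.length - l.length : ℕ)) v.length = v := by
  obtain ⟨e, he⟩ : ∃ e, L = (P.length - l.length) + v.length + e :=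
    ⟨_, (Nat.add_sub_of_le (by omega)).symm⟩
  rw [he, seg_add, seg_add] at h
  have h' : (l ++ seg x i (P.length - l.length)) ++ (seg x (i + (P.length - l.length : ℕ)) v.length
      ++ (seg x (i + (P.length - l.length + v.length : ℕ)) e ++ r)) = P ++ (v ++ S) := by
    simpa only [List.append_assoc] using h
  obtain ⟨-, h''⟩ := List.append_inj h' (by simp; omega)
  exact (List.append_inj h'' (by simp)).1

end Segments


section Membership

variable {σ : A → List A}

def mZeroPoints (σ : A → List A) : Set (ℤ → A) :=
  {x | ∃ t : ℕ → A × ℕ, MZero σ t ∧ IsMPoint σ t x}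

def lambdaOrbits (σ : A → List A) : Set (ℤ → A) :=
  {x | ∃ s : ℕ → A × A, MemLambda σ s ∧
    ∃ w : ℤ → A, IsLambdaPoint σ s w ∧ ∃ k : ℤ, x = shiftZ k w}

lemma mem_Xsub_of_forall_exists_seg {x : ℤ → A}
    (h : ∀ n : ℕ, ∃ (i : ℤ) (L : ℕ), i ≤ -n ∧ (n : ℤ) < i + L ∧ seg x i L ∈ Lang σ) :
    x ∈ Xsub σ := fun n => by
  obtain ⟨i, L, hi, hL, hmem⟩ := h n
  exact mem_lang_of_infix (seg_infix_seg x hi (by push_cast; omega)) hmem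

lemma shiftZ_mem_Xsub {x : ℤ → A} (hx : x ∈ Xsub σ) (k : ℤ) : shiftZ k x ∈ Xsub σ := by
  refine mem_Xsub_of_forall_exists_seg fun n => ⟨-(n + k.natAbs : ℕ) - k, 2 * (n + k.natAbs) + 1,
    by omega, by omega, ?_⟩
  simpa [seg_shiftZ] using hx (n + k.natAbs)

lemma substPow_mem_lang_of_memM {t : ℕ → A × ℕ} (ht : MemM σ t) (m : ℕ) :
    substPow σ m (t m).1 ∈ Lang σ := by
  have hmem : (t m).1 ∈ σ (t (m + 1)).1 := List.mem_of_getElem? (ht.2 m)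
  refine ⟨(t (m + 1)).1, m + 1, by omega, ?_⟩
  rw [← substPow, substPow_succ]
  exact substIter_infix_substIter σ m ((List.singleton_infix_iff _ _).2 hmem)

lemma mZeroPoints_subset_Xsub : mZeroPoints σ ⊆ Xsub σ := by
  rintro x ⟨t, ⟨ht, hgrowth⟩, hx⟩
  refine mem_Xsub_of_forall_exists_seg fun n => ?_
  obtain ⟨m, hm⟩ := hgrowth (n + 1)
  obtain ⟨h₁, h₂⟩ := hm m le_rfl
  refine ⟨-(jSeq σ t m : ℤ), (substPow σ m (t m).1).length, by omega, by omega, ?_⟩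
  rw [hx m]
  exact substPow_mem_lang_of_memM ht m

lemma lambdaOrbits_subset_Xsub [Finite A]
    (hlen : ∀ a, Tendsto (fun n => (substPow σ n a).length) atTop atTop) :
    lambdaOrbits σ ⊆ Xsub σ := by
  rintro _ ⟨s, hs, w, hw, k, rfl⟩
  refine shiftZ_mem_Xsub (mem_Xsub_of_forall_exists_seg fun n => ?_) k
  obtain ⟨m, hm⟩ := (eventually_all.2 fun a => (hlen a).eventually_ge_atTop (n + 1)).exists
  have h₁ := hm (s m).1
  have h₂ := hm (s m).2
  refine ⟨-((substPow σ m (s m).1).length : ℤ),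
    (substPow σ m (s m).1).length + (substPow σ m (s m).2).length, by omega, by omega, ?_⟩
  rw [hw m]
  simpa using substIter_mem_lang m (hs m).1

end Membership


section Locate

variable (wt : A → ℕ) (d₀ : A)

/-- Splits `u = u₁ ++ b :: u₂` so that position `q` falls into the block of `b`, each letter `c`
standing for a block of length `wt c`; `d₀` is a junk value for `q` past the end. -/
def locate : List A → ℕ → List A × A × List A
  | [], _ => ([], d₀, [])
  | c :: u, q =>
    if q < wt c then ([], c, u) else
      let r := locate u (q - wt c)
      (c :: r.1, r.2.1, r.2.2)

variable {wt}

lemma locate_append_cons {u₁ u₂ : List A} {b : A} {q : ℕ} (h₁ : (u₁.map wt).sum ≤ q)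
    (h₂ : q < (u₁.map wt).sum + wt b) : locate wt d₀ (u₁ ++ b :: u₂) q = (u₁, b, u₂) := by
  induction u₁ generalizing q with
  | nil => simp_all [locate]
  | cons c u₁ ih =>
    simp only [List.map_cons, List.sum_cons] at h₁ h₂
    rw [List.cons_append, locate, if_neg (by omega), ih (by omega) (by omega)]

lemma exists_eq_append_cons {u : List A} {q : ℕ} (h : q < (u.map wt).sum) :
    ∃ u₁ b u₂, u = u₁ ++ b :: u₂ ∧ (u₁.map wt).sum ≤ q ∧ q < (u₁.map wt).sum + wt b := by
  induction u generalizing q with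
  | nil => simp at h
  | cons c u ih =>
    simp only [List.map_cons, List.sum_cons] at h
    by_cases hq : q < wt c
    · exact ⟨[], c, u, rfl, by simp, by simpa⟩
    · obtain ⟨u₁, b, u₂, rfl, h₁, h₂⟩ := ih (q := q - wt c) (by omega)
      exact ⟨c :: u₁, b, u₂, rfl, by simp; omega, by simp; omega⟩

end Locate

structure Frame (A : Type*) where
  left : A
  letter : A
  right : A
  offset : ℕ

section Frames

variable (σ : A → List A)

def frameAt (d₀ : A) (p : ℕ) (u : List A) (q : ℕ) : Frame A :=
  let r := locate (fun a => (substPow σ p a).length) d₀ u q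
  ⟨r.1.getLastD d₀, r.2.1, r.2.2.headD d₀, q - (substIter σ p r.1).length⟩

lemma frameAt_eq (d₀ : A) {p q : ℕ} {u u₁ u₂ : List A} {l b r : A}
    (hu : u = u₁ ++ l :: b :: r :: u₂) (h₁ : (substIter σ p (u₁ ++ [l])).length ≤ q)
    (h₂ : q < (substIter σ p (u₁ ++ [l])).length + (substPow σ p b).length) :
    frameAt σ d₀ p u q = ⟨l, b, r, q - (substIter σ p (u₁ ++ [l])).length⟩ := by
  rw [length_substIter] at h₁ h₂
  have hu' : u = (u₁ ++ [l]) ++ b :: r :: u₂ := by simp [hu]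
  simp only [frameAt, hu', locate_append_cons d₀ h₁ h₂, List.getLastD_concat, List.headD_cons]

/-- The `p`-th desubstitution of `x` around the origin: `x` reads
`σ^p(left) σ^p(letter) σ^p(right)`, the origin being at position `offset` of `σ^p(letter)`. -/
structure IsFrame (x : ℤ → A) (p : ℕ) (s : Frame A) : Prop where
  offset_lt : s.offset < (substPow σ p s.letter).length
  left_mem_lang : [s.left, s.letter] ∈ Lang σ
  right_mem_lang : [s.letter, s.right] ∈ Lang σ
  seg_left : seg x (-s.offset - (substPow σ p s.left).length) (substPow σ p s.left).length =
    substPow σ p s.left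
  seg_letter : seg x (-s.offset) (substPow σ p s.letter).length = substPow σ p s.letter
  seg_right : seg x (-s.offset + (substPow σ p s.letter).length) (substPow σ p s.right).length =
    substPow σ p s.right

structure IsRefinement (p : ℕ) (s s' : Frame A) (i : ℕ) : Prop where
  getElem?_eq : (σ s'.letter)[i]? = some s.letter
  offset_eq : s'.offset = s.offset + (substIter σ p ((σ s'.letter).take i)).length
  getLast?_eq : i = 0 → (σ s'.left).getLast? = some s.left
  head?_eq : i + 1 = (σ s'.letter).length → (σ s'.right).head? = some s.right

variable [Fintype A]

def maxLength (p : ℕ) : ℕ :=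
  Finset.univ.sup fun a => (substPow σ p a).length

lemma length_substPow_le_maxLength (p : ℕ) (a : A) : (substPow σ p a).length ≤ maxLength σ p :=
  Finset.le_sup (f := fun a => (substPow σ p a).length) (Finset.mem_univ a)

lemma exists_eq_append_around {p q : ℕ} {u : List A} (hq : maxLength σ p ≤ q)
    (hq' : q + maxLength σ p < (substIter σ p u).length) :
    ∃ u₁ l b r u₂, u = u₁ ++ l :: b :: r :: u₂ ∧ (substIter σ p (u₁ ++ [l])).length ≤ q ∧
      q < (substIter σ p (u₁ ++ [l])).length + (substPow σ p b).length := by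
  rw [length_substIter] at hq'
  obtain ⟨v₁, b, v₂, rfl, h₁, h₂⟩ :=
    exists_eq_append_cons (u := u) (q := q) (wt := fun a => (substPow σ p a).length) (by omega)
  have hb := length_substPow_le_maxLength σ p b
  obtain ⟨u₁, l, rfl⟩ : ∃ u₁ l, v₁ = u₁ ++ [l] := by
    refine (List.eq_nil_or_concat' v₁).resolve_left ?_
    rintro rfl
    simp at h₂
    omega
  obtain ⟨r, u₂, rfl⟩ : ∃ r u₂, v₂ = r :: u₂ := by
    refine List.exists_cons_of_ne_nil ?_
    rintro rfl
    simp at hq' h₁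
    omega
  exact ⟨u₁, l, b, r, u₂, by simp, by rwa [length_substIter], by rwa [length_substIter]⟩

lemma isFrame_frameAt (d₀ : A) {x : ℤ → A} {p n : ℕ} {u l r : List A} (hu : u ∈ Lang σ)
    (hw : substIter σ p u = l ++ seg x (-n) (2 * n + 1) ++ r) (hn : 2 * maxLength σ p ≤ n) :
    IsFrame σ x p (frameAt σ d₀ p u (l.length + n)) := by
  have hlen : (substIter σ p u).length = l.length + (2 * n + 1) + r.length := by
    simp [hw]
    omega
  have hq : maxLength σ p ≤ l.length + n := by omega
  have hq' : l.length + n + maxLength σ p < (substIter σ p u).length := by omega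
  obtain ⟨u₁, a, b, c, u₂, rfl, h₁, h₂⟩ := exists_eq_append_around σ hq hq'
  rw [frameAt_eq σ d₀ rfl h₁ h₂]
  have ha := length_substPow_le_maxLength σ p a
  have hb := length_substPow_le_maxLength σ p b
  have hc := length_substPow_le_maxLength σ p c
  simp only [substIter_append, substIter_cons, substIter_nil, List.append_nil,
    List.length_append] at h₁ h₂ ⊢
  have hsplit : l ++ seg x (-n) (2 * n + 1) ++ r = substIter σ p u₁ ++
      (substPow σ p a ++ substPow σ p b ++ substPow σ p c) ++ substIter σ p u₂ := by
    rw [← hw]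
    simp
  have hseg := seg_eq_of_append_eq hsplit (by omega) (by simp; omega)
  obtain ⟨hab, hc'⟩ := seg_append_eq_iff.1 hseg
  obtain ⟨ha', hb'⟩ := seg_append_eq_iff.1 hab
  refine ⟨by dsimp only; omega, mem_lang_of_infix ⟨u₁, c :: u₂, by simp⟩ hu,
    mem_lang_of_infix ⟨u₁ ++ [a], u₂, by simp⟩ hu, ?_, ?_, ?_⟩
  · convert ha' using 2
    dsimp only
    omega
  · convert hb' using 2
    dsimp only
    omega
  · convert hc' using 2
    simp only [List.length_append]
    omega

omit [Fintype A] in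
lemma exists_append_eq_concat {v : List A} (hv : v ≠ []) (w : List A) :
    ∃ V l, v ++ w = V ++ [l] ∧ (w = [] → v.getLast? = some l) := by
  rcases List.eq_nil_or_concat' w with rfl | ⟨L, a, rfl⟩
  · obtain ⟨V, l, rfl⟩ := (List.eq_nil_or_concat' v).resolve_left hv
    exact ⟨V, l, by simp, fun _ => by simp⟩
  · exact ⟨v ++ L, a, by simp, fun h => by simp at h⟩

omit [Fintype A] in
lemma exists_append_eq_cons {v : List A} (hv : v ≠ []) (w : List A) :
    ∃ V r, w ++ v = r :: V ∧ (w = [] → v.head? = some r) := by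
  cases w with
  | nil =>
    obtain ⟨r, V, rfl⟩ := List.exists_cons_of_ne_nil hv
    exact ⟨V, r, rfl, fun _ => rfl⟩
  | cons a L => exact ⟨L ++ v, a, rfl, fun h => by simp at h⟩

lemma isRefinement_frameAt (hne : ∀ a, σ a ≠ []) (d₀ : A) {p q : ℕ} {u : List A}
    (hq : maxLength σ (p + 1) ≤ q)
    (hq' : q + maxLength σ (p + 1) < (substIter σ (p + 1) u).length) :
    ∃ i, IsRefinement σ p (frameAt σ d₀ p (substWord σ u) q) (frameAt σ d₀ (p + 1) u q) i := by
  obtain ⟨U₁, l', b', r', U₂, rfl, h₁, h₂⟩ := exists_eq_append_around σ hq hq'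
  rw [frameAt_eq σ d₀ rfl h₁ h₂]
  have hj : q - (substIter σ (p + 1) (U₁ ++ [l'])).length < (substIter σ p (σ b')).length := by
    rw [← substPow_succ]
    omega
  rw [length_substIter σ p (σ b')] at hj
  obtain ⟨w₁, b, w₂, hb', k₁, k₂⟩ := exists_eq_append_cons hj
  rw [← length_substIter] at k₁ k₂
  obtain ⟨V₁, l, hV₁, hl⟩ := exists_append_eq_concat (hne l') w₁
  obtain ⟨V₂, r, hV₂, hr⟩ := exists_append_eq_cons (hne r') w₂
  have hu : substWord σ (U₁ ++ l' :: b' :: r' :: U₂) =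
      (substWord σ U₁ ++ V₁) ++ l :: b :: r :: (V₂ ++ substWord σ U₂) := by
    have : substWord σ (U₁ ++ l' :: b' :: r' :: U₂) =
        substWord σ U₁ ++ (σ l' ++ w₁) ++ b :: (w₂ ++ σ r') ++ substWord σ U₂ := by
      simp [hb']
    rw [this, hV₁, hV₂]
    simp
  have hlen : (substIter σ p ((substWord σ U₁ ++ V₁) ++ [l])).length =
      (substIter σ (p + 1) (U₁ ++ [l'])).length + (substIter σ p w₁).length := by
    rw [List.append_assoc, ← hV₁]
    simp [substIter_succ]
    omega
  rw [frameAt_eq σ d₀ hu (by omega) (by omega)]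
  refine ⟨w₁.length, by simp [hb'], ?_, fun h => hl (List.length_eq_zero_iff.1 h),
    fun h => hr ?_⟩
  · simp only [hb', List.take_left' rfl]
    omega
  · simp only [hb', List.length_append, List.length_cons] at h
    exact List.length_eq_zero_iff.1 (by omega)

lemma isFrame_and_isRefinement_of_window (hne : ∀ a, σ a ≠ []) (d₀ : A) {x : ℤ → A} {a : A} {k n p : ℕ}
    {l r : List A} (hw : substPow σ k a = l ++ seg x (-n) (2 * n + 1) ++ r)
    (hn : 2 * maxLength σ (p + 1) ≤ n) :
    IsFrame σ x p (frameAt σ d₀ p (substIter σ (k - p) [a]) (l.length + n)) ∧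
      ∃ i, IsRefinement σ p (frameAt σ d₀ p (substIter σ (k - p) [a]) (l.length + n))
        (frameAt σ d₀ (p + 1) (substIter σ (k - (p + 1)) [a]) (l.length + n)) i := by
  have hlen : (substPow σ k a).length = l.length + (2 * n + 1) + r.length := by
    simp [hw]
    omega
  have hk : p + 2 ≤ k := by
    by_contra h
    have := monotone_length_substPow hne a (show k ≤ p + 1 by omega)
    have := length_substPow_le_maxLength σ (p + 1) a
    simp only at *
    omega
  have hmax : maxLength σ p ≤ maxLength σ (p + 1) :=
    Finset.sup_mono_fun fun b _ => monotone_length_substPow hne b (Nat.le_succ p)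
  have hsplit : ∀ m ≤ k, substIter σ m (substIter σ (k - m) [a]) = substPow σ k a :=
    fun m hm => by rw [← substIter_add, Nat.add_sub_cancel' hm]; rfl
  refine ⟨isFrame_frameAt σ d₀ ⟨a, k - p, by omega, List.infix_refl _⟩
    ((hsplit p (by omega)).trans hw) (by omega), ?_⟩
  rw [show k - p = k - (p + 1) + 1 by omega, substIter_succ']
  exact isRefinement_frameAt σ hne d₀ (by omega) (by rw [hsplit (p + 1) (by omega)]; omega)

end Frames

/-- König's lemma, through a free ultrafilter on `ℕ`: `c p` is the limit of `D · p` along it. -/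
theorem exists_seq_forall_of_eventually {α : Type*} (D : ℕ → ℕ → α) (V : ℕ → Set α)
    (hV : ∀ p, (V p).Finite) (hDV : ∀ p, ∀ᶠ n in atTop, D n p ∈ V p)
    (Q : ℕ → α → α → Prop) (hQ : ∀ p, ∀ᶠ n in atTop, Q p (D n p) (D n (p + 1))) :
    ∃ c : ℕ → α, ∀ p, Q p (c p) (c (p + 1)) := by
  let U := hyperfilter ℕ
  have hU : ∀ {P : ℕ → Prop}, (∀ᶠ n in atTop, P n) → ∀ᶠ n in (U : Filter ℕ), P n :=
    fun h => hyperfilter_le_cofinite (Nat.cofinite_eq_atTop ▸ h)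
  have hlim : ∀ p, ∃ c, ∀ᶠ n in (U : Filter ℕ), D n p = c := fun p => by
    obtain ⟨c, -, hc⟩ :=
      Ultrafilter.eq_pure_of_finite_mem (f := U.map (D · p)) (hV p) (hU (hDV p))
    have : {c} ∈ U.map (D · p) := by
      rw [hc]
      exact Ultrafilter.mem_pure.2 rfl
    exact ⟨c, Ultrafilter.mem_map.1 this⟩
  choose c hc using hlim
  refine ⟨c, fun p => ?_⟩
  obtain ⟨n, h₁, h₂, h₃⟩ := ((hc p).and ((hc (p + 1)).and (hU (hQ p)))).exists
  rwa [← h₁, ← h₂]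

lemma finite_setOf_offset_le [Finite A] (L : ℕ) : {s : Frame A | s.offset ≤ L}.Finite :=
  ((Set.finite_univ (α := A × A × A)).prod (Set.finite_Iic L)).image
    (fun s => (⟨s.1.1, s.1.2.1, s.1.2.2, s.2⟩ : Frame A)) |>.subset
    fun s hs => ⟨((s.left, s.letter, s.right), s.offset), ⟨trivial, hs⟩, rfl⟩

lemma exists_frame_chain [Fintype A] {σ : A → List A} (hne : ∀ a, σ a ≠ []) {x : ℤ → A}
    (hx : x ∈ Xsub σ) : ∃ (c : ℕ → Frame A) (i : ℕ → ℕ),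
      (∀ p, IsFrame σ x p (c p)) ∧ ∀ p, IsRefinement σ p (c p) (c (p + 1)) (i p) := by
  have hwin : ∀ n : ℕ, ∃ a k l r, substPow σ k a = l ++ seg x (-n) (2 * n + 1) ++ r :=
    fun n => by
      obtain ⟨a, k, -, l, r, h⟩ := hx n
      exact ⟨a, k, l, r, h.symm⟩
  choose a k l r hw using hwin
  have hD := fun p n (hn : n ≥ 2 * maxLength σ (p + 1)) =>
    isFrame_and_isRefinement_of_window σ hne (x 0) (p := p) (hw n) hn
  obtain ⟨c, hc⟩ := exists_seq_forall_of_eventually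
    (fun n p => frameAt σ (x 0) p (substIter σ (k n - p) [a n]) ((l n).length + n))
    (fun p => {s | s.offset ≤ maxLength σ p}) (fun p => finite_setOf_offset_le _)
    (fun p => eventually_atTop.2 ⟨_, fun n hn =>
      ((hD p n hn).1.offset_lt.trans_le (length_substPow_le_maxLength σ p _)).le⟩)
    (fun p s s' => IsFrame σ x p s ∧ ∃ i, IsRefinement σ p s s' i)
    (fun p => eventually_atTop.2 ⟨_, hD p⟩)
  choose i hi using fun p => (hc p).2
  exact ⟨c, i, fun p => (hc p).1, hi⟩


section LambdaPoints

variable {σ : A → List A} (hne : ∀ a, σ a ≠ [])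

lemma seg_substPow_of_succ {w : ℤ → A} {n : ℕ} {l b l' b' : A}
    (hl : (σ l').getLast? = some l) (hb : (σ b').head? = some b)
    (h : seg w (-(substPow σ (n + 1) l').length)
      ((substPow σ (n + 1) l').length + (substPow σ (n + 1) b').length) =
        substPow σ (n + 1) l' ++ substPow σ (n + 1) b') :
    seg w (-(substPow σ n l).length) ((substPow σ n l).length + (substPow σ n b).length) =
      substPow σ n l ++ substPow σ n b := by
  obtain ⟨u, hu⟩ := List.getLast?_eq_some_iff.1 hl
  obtain ⟨v, hv⟩ := List.head?_eq_some_iff.1 hb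
  simp only [substPow_succ, hu, hv, substIter_append, substIter_cons, substIter_nil,
    List.append_nil] at h
  rw [← List.length_append] at h ⊢
  have h' : seg w (-(substIter σ n u ++ substPow σ n l).length)
      (substIter σ n u ++ (substPow σ n l ++ substPow σ n b) ++ substIter σ n v).length =
        substIter σ n u ++ (substPow σ n l ++ substPow σ n b) ++ substIter σ n v := by
    simpa only [List.append_assoc, List.length_append, Nat.add_assoc] using h
  obtain ⟨h₁, -⟩ := seg_append_eq_iff.1 h'
  obtain ⟨-, h₂⟩ := seg_append_eq_iff.1 h₁
  convert h₂ using 2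
  simp

include hne

lemma exists_memLambda_of_eventually {w : ℤ → A} (P : ℕ) (s : ℕ → A × A)
    (hs : ∀ n ≥ P, [(s n).1, (s n).2] ∈ Lang σ ∧ (σ (s (n + 1)).1).getLast? = some (s n).1 ∧
      (σ (s (n + 1)).2).head? = some (s n).2)
    (hw : ∀ n ≥ P, seg w (-(substPow σ n (s n).1).length)
      ((substPow σ n (s n).1).length + (substPow σ n (s n).2).length) =
        substPow σ n (s n).1 ++ substPow σ n (s n).2) :
    ∃ s', MemLambda σ s' ∧ IsLambdaPoint σ s' w := by
  -- below level `P` the pair is forced by `MemLambda`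
  let pred (lb : A × A) : A × A := ((σ lb.1).getLast (hne _), (σ lb.2).head (hne _))
  let s' (n : ℕ) : A × A := if P ≤ n then s n else pred^[P - n] (s P)
  have hs' : ∀ n ≥ P, s' n = s n := fun n hn => if_pos hn
  have hs'_pred : ∀ n < P, s' n = pred (s' (n + 1)) := fun n hn => by
    simp only [s', if_neg (show ¬P ≤ n by omega), show P - n = P - (n + 1) + 1 by omega,
      Function.iterate_succ_apply']
    rcases (show n + 1 < P ∨ n + 1 = P by omega) with h | h
    · rw [if_neg (by omega)]
    · rw [if_pos h.ge, h, Nat.sub_self, Function.iterate_zero_apply]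
  have hlink : ∀ n, (σ (s' (n + 1)).1).getLast? = some (s' n).1 ∧
      (σ (s' (n + 1)).2).head? = some (s' n).2 := fun n => by
    by_cases hn : P ≤ n
    · rw [hs' n hn, hs' (n + 1) (by omega)]
      exact (hs n hn).2
    · rw [hs'_pred n (by omega)]
      exact ⟨List.getLast?_eq_some_getLast _, List.head?_eq_some_head _⟩
  have hgood : ∀ n, [(s' n).1, (s' n).2] ∈ Lang σ ∧ seg w (-(substPow σ n (s' n).1).length)
      ((substPow σ n (s' n).1).length + (substPow σ n (s' n).2).length) =
        substPow σ n (s' n).1 ++ substPow σ n (s' n).2 := fun n => by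
    rcases le_total P n with hn | hn
    · rw [hs' n hn]
      exact ⟨(hs n hn).1, hw n hn⟩
    induction hn using Nat.decreasingInduction with
    | self =>
      rw [hs' P le_rfl]
      exact ⟨(hs P le_rfl).1, hw P le_rfl⟩
    | of_succ k hk ih =>
      exact ⟨pair_mem_lang_of_succ ih.1 (hlink k).1 (hlink k).2,
        seg_substPow_of_succ (hlink k).1 (hlink k).2 ih.2⟩
  exact ⟨s', fun n => ⟨(hgood n).1, hlink n⟩, fun n => (hgood n).2⟩

lemma mem_lambdaOrbits_of_eventually {x : ℤ → A} (d : ℤ) (P : ℕ) (s : ℕ → A × A)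
    (hs : ∀ n ≥ P, [(s n).1, (s n).2] ∈ Lang σ ∧ (σ (s (n + 1)).1).getLast? = some (s n).1 ∧
      (σ (s (n + 1)).2).head? = some (s n).2)
    (hx : ∀ n ≥ P, seg x (d - (substPow σ n (s n).1).length)
      ((substPow σ n (s n).1).length + (substPow σ n (s n).2).length) =
        substPow σ n (s n).1 ++ substPow σ n (s n).2) :
    x ∈ lambdaOrbits σ := by
  obtain ⟨s', hs', hw⟩ := exists_memLambda_of_eventually hne (w := shiftZ d x) P s hs
    fun n hn => by rw [seg_shiftZ, neg_add_eq_sub]; exact hx n hn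
  exact ⟨s', hs', _, hw, -d, funext fun k => by simp [shiftZ]⟩

end LambdaPoints


section Refinement

variable {σ : A → List A} {p i : ℕ} {s s' : Frame A}

lemma IsRefinement.index_eq_zero (hne : ∀ a, σ a ≠ []) (hr : IsRefinement σ p s s' i)
    (h : s'.offset = s.offset) : i = 0 := by
  by_contra hi
  have htake : (σ s'.letter).take i ≠ [] := by simp [List.take_eq_nil_iff, hi, hne]
  have := List.length_pos_of_ne_nil (substIter_ne_nil hne p htake)
  have := hr.offset_eq
  omega

lemma IsRefinement.length_sub_offset_eq (hr : IsRefinement σ p s s' i)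
    (hs : s.offset < (substPow σ p s.letter).length) :
    (substPow σ (p + 1) s'.letter).length - s'.offset =
      (substPow σ p s.letter).length - s.offset +
        (substIter σ p ((σ s'.letter).drop (i + 1))).length := by
  obtain ⟨hi, hget⟩ := List.getElem?_eq_some_iff.1 hr.getElem?_eq
  have hsplit :
      σ s'.letter = (σ s'.letter).take i ++ s.letter :: (σ s'.letter).drop (i + 1) := by
    conv_lhs =>
      rw [← List.take_append_drop i (σ s'.letter), List.drop_eq_getElem_cons hi, hget]
  have hlen : (substIter σ p (σ s'.letter)).length =
      (substIter σ p ((σ s'.letter).take i)).length + (substPow σ p s.letter).length +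
        (substIter σ p ((σ s'.letter).drop (i + 1))).length := by
    conv_lhs => rw [hsplit]
    simp only [substIter_append, substIter_cons, List.length_append]
    omega
  have := hr.offset_eq
  rw [substPow_succ]
  omega

lemma IsRefinement.index_add_one_eq (hne : ∀ a, σ a ≠ []) (hr : IsRefinement σ p s s' i)
    (hs : s.offset < (substPow σ p s.letter).length)
    (h : (substPow σ (p + 1) s'.letter).length - s'.offset =
      (substPow σ p s.letter).length - s.offset) :
    i + 1 = (σ s'.letter).length := by
  have hi := (List.getElem?_eq_some_iff.1 hr.getElem?_eq).1
  have hdrop : (σ s'.letter).drop (i + 1) = [] := by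
    by_contra hd
    have := List.length_pos_of_ne_nil (substIter_ne_nil hne p hd)
    have := hr.length_sub_offset_eq hs
    omega
  have := List.drop_eq_nil_iff.1 hdrop
  omega

end Refinement

lemma exists_eq_or_tendsto_atTop_of_monotone {f : ℕ → ℕ} (hf : Monotone f) :
    (∃ P, ∀ p ≥ P, f p = f P) ∨ Tendsto f atTop atTop := by
  by_cases h : BddAbove (Set.range f)
  · obtain ⟨P, hP⟩ := Nat.sSup_mem (Set.range_nonempty f) h
    exact Or.inl ⟨P, fun p hp => le_antisymm (hP ▸ le_csSup h ⟨p, rfl⟩) (hf hp)⟩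
  · refine Or.inr ((tendsto_atTop_atTop_iff_of_monotone hf).2 fun b => ?_)
    by_contra! hb
    exact h ⟨b, by rintro _ ⟨a, rfl⟩; exact (hb a).le⟩

section Chains

variable {σ : A → List A} {x : ℤ → A} {c : ℕ → Frame A} {i : ℕ → ℕ}
  (hc : ∀ p, IsFrame σ x p (c p)) (hr : ∀ p, IsRefinement σ p (c p) (c (p + 1)) (i p))

include hr in
lemma monotone_offset : Monotone fun p => (c p).offset :=
  monotone_nat_of_le_succ fun p => (hr p).offset_eq ▸ Nat.le_add_right _ _

include hc hr in
lemma monotone_length_sub_offset :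
    Monotone fun p => (substPow σ p (c p).letter).length - (c p).offset :=
  monotone_nat_of_le_succ fun p =>
    (hr p).length_sub_offset_eq (hc p).offset_lt ▸ Nat.le_add_right _ _

include hc hr in
lemma mem_mZeroPoints_of_tendsto (hJ : Tendsto (fun p => (c p).offset) atTop atTop)
    (hG : Tendsto (fun p => (substPow σ p (c p).letter).length - (c p).offset) atTop atTop) :
    x ∈ mZeroPoints σ := by
  let t (p : ℕ) : A × ℕ := ((c p).letter, if p = 0 then 0 else i (p - 1))
  have hj : ∀ p, jSeq σ t p = (c p).offset := by
    intro p
    induction p with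
    | zero =>
      have := (hc 0).offset_lt
      simp only [substPow, substIter, Function.iterate_zero_apply, List.length_singleton] at this
      simp [jSeq]
      omega
    | succ p ih => simp [jSeq, ih, t, (hr p).offset_eq, substIter_eq_substWord]
  refine ⟨t, ⟨⟨rfl, fun j => by simpa [t] using (hr j).getElem?_eq⟩, fun N => ?_⟩,
    fun n => by rw [hj]; exact (hc n).seg_letter⟩
  obtain ⟨n₀, hn₀⟩ :=
    eventually_atTop.1 ((hJ.eventually_ge_atTop N).and (hG.eventually_ge_atTop N))
  refine ⟨n₀, fun n hn => ?_⟩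
  have := hn₀ n hn
  have := (hc n).offset_lt
  simp only [hj, t]
  omega

variable (hne : ∀ a, σ a ≠ [])
include hc hr hne

lemma mem_lambdaOrbits_of_offset_eventually_const {P : ℕ}
    (hP : ∀ p ≥ P, (c p).offset = (c P).offset) : x ∈ lambdaOrbits σ := by
  have hi : ∀ n ≥ P, i n = 0 := fun n hn =>
    (hr n).index_eq_zero hne (by rw [hP (n + 1) (by omega), hP n hn])
  refine mem_lambdaOrbits_of_eventually hne (-(c P).offset) P
    (fun n => ((c n).left, (c n).letter))
    (fun n hn => ⟨(hc n).left_mem_lang, (hr n).getLast?_eq (hi n hn), ?_⟩) fun n hn => ?_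
  · simpa [List.head?_eq_getElem?, hi n hn] using (hr n).getElem?_eq
  · rw [← List.length_append, seg_append_eq_iff, ← hP n hn]
    refine ⟨(hc n).seg_left, ?_⟩
    simpa using (hc n).seg_letter

lemma mem_lambdaOrbits_of_length_sub_offset_eventually_const {P : ℕ}
    (hP : ∀ p ≥ P, (substPow σ p (c p).letter).length - (c p).offset =
      (substPow σ P (c P).letter).length - (c P).offset) : x ∈ lambdaOrbits σ := by
  have hi : ∀ n ≥ P, i n + 1 = (σ (c (n + 1)).letter).length := fun n hn =>
    (hr n).index_add_one_eq hne (hc n).offset_lt (by rw [hP (n + 1) (by omega), hP n hn])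
  refine mem_lambdaOrbits_of_eventually hne
    ((substPow σ P (c P).letter).length - (c P).offset : ℕ) P
    (fun n => ((c n).letter, (c n).right))
    (fun n hn => ⟨(hc n).right_mem_lang, ?_, (hr n).head?_eq (hi n hn)⟩) fun n hn => ?_
  · simpa [List.getLast?_eq_getElem?, ← hi n hn] using (hr n).getElem?_eq
  · have := (hc n).offset_lt
    dsimp only
    rw [← List.length_append, seg_append_eq_iff, ← hP n hn]
    constructor
    · convert (hc n).seg_letter using 2
      omega
    · convert (hc n).seg_right using 2
      omega

end Chains

theorem phase_space_description_general
    {A : Type*} [Fintype A] (σ : A → List A)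
    (hlen : ∀ a : A, Filter.Tendsto (fun n => (substPow σ n a).length)
      Filter.atTop Filter.atTop) :
    Xsub σ =
      {x : ℤ → A | ∃ t : ℕ → A × ℕ, MZero σ t ∧ IsMPoint σ t x} ∪
      {x : ℤ → A | ∃ s : ℕ → A × A, MemLambda σ s ∧
        ∃ w : ℤ → A, IsLambdaPoint σ s w ∧ ∃ k : ℤ, x = shiftZ k w} := by
  have hne := ne_nil_of_tendsto_length hlen
  refine Set.Subset.antisymm (fun x hx => ?_)
    (Set.union_subset mZeroPoints_subset_Xsub (lambdaOrbits_subset_Xsub hlen))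
  obtain ⟨c, i, hc, hr⟩ := exists_frame_chain hne hx
  rcases exists_eq_or_tendsto_atTop_of_monotone (monotone_offset hr) with ⟨P, hP⟩ | hJ
  · exact Or.inr (mem_lambdaOrbits_of_offset_eventually_const hc hr hne hP)
  rcases exists_eq_or_tendsto_atTop_of_monotone (monotone_length_sub_offset hc hr)
    with ⟨P, hP⟩ | hG
  · exact Or.inr (mem_lambdaOrbits_of_length_sub_offset_eventually_const hc hr hne hP)
  · exact Or.inl (mem_mZeroPoints_of_tendsto hc hr hJ hG)

/-- If `|σ^n(a)| → ∞` for every letter `a`, then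
`X_σ = {w(m̄) : m̄ ∈ M₀} ∪ ⋃_{s̄ ∈ Λ} Orb_{T_σ}(w(s̄))`. -/
theorem phase_space_description
    {A : Type*} [Fintype A] (σ : A → List A) (hne : ∀ a, σ a ≠ [])
    (hunc : ¬ (Xsub σ).Countable)
    (hlen : ∀ a : A, Filter.Tendsto (fun n => (substPow σ n a).length)
      Filter.atTop Filter.atTop) :
    Xsub σ =
      {x : ℤ → A | ∃ t : ℕ → A × ℕ, MZero σ t ∧ IsMPoint σ t x} ∪
      {x : ℤ → A | ∃ s : ℕ → A × A, MemLambda σ s ∧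
        ∃ w : ℤ → A, IsLambdaPoint σ s w ∧ ∃ k : ℤ, x = shiftZ k w} :=
  phase_space_description_general σ hlen

end PaperStmt
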